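/- Let α, ε > 0, let w̃(k) = Σ_{m=1}^∞ (1 − cos(k m))/m^{1+α}, define Ω²(k) = 4 ε w̃(k) ( ε w̃(k) − A² ) for A > 0, and set A₀ = (4 ε (1 − 2^{−(1+α)}) ζ(1+α))^{1/2}. If A ≥ A₀, then min_{k ∈ [−π, π]} Ω²(k) = Ω²(π) = Ω²(−π) = −A₀² (2A² − A₀²). -/

import Mathlib

open scoped BigOperators
open Real MeasureTheory Set

noncomputable section

/-- The dispersion symbol `w̃(k) = Σ_{m=1}^∞ (1 − cos(km))/m^{1+α}`. -/
def wt (α k : ℝ) : ℝ :=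
  ∑' m : ℕ, (1 - Real.cos (k * ((m + 1 : ℕ) : ℝ))) / ((m + 1 : ℕ) : ℝ) ^ (1 + α)

/-- The Riemann zeta function of a real argument `s > 1`, as `Σ_{n=1}^∞ n^{−s}`. -/
def zetaR (s : ℝ) : ℝ := ∑' n : ℕ, 1 / ((n + 1 : ℕ) : ℝ) ^ s

/-- `Ω²(k) = 4 ε w̃(k) (ε w̃(k) − A²)`. -/
def Om2 (α ε A k : ℝ) : ℝ := 4 * ε * wt α k * (ε * wt α k - A ^ 2)

/-- The threshold amplitude `A₀ = (4ε(1 − 2^{−(1+α)}) ζ(1+α))^{1/2}`. -/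
def A0 (α ε : ℝ) : ℝ := Real.sqrt (4 * ε * (1 - (2 : ℝ) ^ (-(1 + α))) * zetaR (1 + α))


lemma summable_base {s : ℝ} (hs : 1 < s) :
    Summable (fun m : ℕ => 1 / ((m : ℝ) + 1) ^ s) := by
  have h := Real.summable_one_div_nat_rpow.2 hs
  have := (summable_nat_add_iff 1).2 h
  simpa [Nat.cast_add] using this

lemma summable_cos_term {s : ℝ} (hs : 1 < s) (k : ℝ) :
    Summable (fun m : ℕ => (1 - Real.cos (k * ((m : ℝ) + 1))) / ((m : ℝ) + 1) ^ s) := by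
  have hb := (summable_base hs).mul_left 2
  refine Summable.of_nonneg_of_le (fun m => ?_) (fun m => ?_) hb
  · have h1 : Real.cos (k * ((m : ℝ) + 1)) ≤ 1 := Real.cos_le_one _
    have h2 : (0:ℝ) < ((m : ℝ) + 1) ^ s := Real.rpow_pos_of_pos (by positivity) _
    exact div_nonneg (by linarith) h2.le
  · have h2 : (0:ℝ) < ((m : ℝ) + 1) ^ s := Real.rpow_pos_of_pos (by positivity) _
    rw [div_le_iff₀ h2]
    have h1 : -1 ≤ Real.cos (k * ((m : ℝ) + 1)) := Real.neg_one_le_cos _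
    have : (1:ℝ) - Real.cos (k * ((m : ℝ) + 1)) ≤ 2 := by linarith
    calc (1:ℝ) - Real.cos (k * ((m : ℝ) + 1)) ≤ 2 := this
      _ = 2 * (1 / ((m : ℝ) + 1) ^ s) * ((m : ℝ) + 1) ^ s := by field_simp

lemma wt_eq (α k : ℝ) :
    (∑' m : ℕ, (1 - Real.cos (k * ((m + 1 : ℕ) : ℝ))) / ((m + 1 : ℕ) : ℝ) ^ (1 + α)) =
    ∑' m : ℕ, (1 - Real.cos (k * ((m : ℝ) + 1))) / ((m : ℝ) + 1) ^ (1 + α) := by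
  congr 1; funext m; push_cast; ring_nf

lemma wt_nonneg' {s : ℝ} (k : ℝ) :
    0 ≤ ∑' m : ℕ, (1 - Real.cos (k * ((m : ℝ) + 1))) / ((m : ℝ) + 1) ^ s := by
  refine tsum_nonneg fun m => ?_
  have h1 : Real.cos (k * ((m : ℝ) + 1)) ≤ 1 := Real.cos_le_one _
  have h2 : (0:ℝ) < ((m : ℝ) + 1) ^ s := Real.rpow_pos_of_pos (by positivity) _
  exact div_nonneg (by linarith) h2.le

lemma cos_pi_odd (k : ℕ) : Real.cos (Real.pi * (2 * (k:ℝ) + 1)) = -1 := by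
  have : Real.pi * (2 * (k:ℝ) + 1) = Real.pi + (k : ℤ) * (2 * Real.pi) := by push_cast; ring
  rw [this, Real.cos_add_int_mul_two_pi, Real.cos_pi]

lemma cos_pi_even (k : ℕ) : Real.cos (Real.pi * (2 * (k:ℝ) + 2)) = 1 := by
  have : Real.pi * (2 * (k:ℝ) + 2) = 0 + ((k + 1 : ℤ) : ℝ) * (2 * Real.pi) := by push_cast; ring
  rw [this, Real.cos_add_int_mul_two_pi, Real.cos_zero]

lemma odd_even_split {s : ℝ} (hs : 1 < s) :
    (∑' k : ℕ, 1 / (2 * (k : ℝ) + 1) ^ s) =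
      (1 - (2:ℝ) ^ (-s)) * ∑' m : ℕ, 1 / ((m : ℝ) + 1) ^ s := by
  set f : ℕ → ℝ := fun m => 1 / ((m : ℝ) + 1) ^ s with hfdef
  have hf := summable_base hs
  have h2 : Function.Injective (fun k : ℕ => 2 * k) := fun a b h => by simpa using h
  have h3 : Function.Injective (fun k : ℕ => 2 * k + 1) := fun a b h => by simpa using h
  have he : Summable (fun k => f (2 * k)) := hf.comp_injective h2
  have ho : Summable (fun k => f (2 * k + 1)) := hf.comp_injective h3
  have hsum : (∑' k, f (2 * k)) + (∑' k, f (2 * k + 1)) = ∑' m, f m :=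
    (he.hasSum.even_add_odd ho.hasSum).tsum_eq.symm
  have heq : (fun k : ℕ => f (2 * k)) = fun k : ℕ => 1 / (2 * (k : ℝ) + 1) ^ s := by
    funext k
    have hc : ((2 * k : ℕ) : ℝ) + 1 = 2 * (k:ℝ) + 1 := by push_cast; ring
    simp only [hfdef, hc]
  have hoq : (fun k : ℕ => f (2 * k + 1)) = fun k : ℕ => (2:ℝ) ^ (-s) * f k := by
    funext k
    have hx : ((2 * k + 1 : ℕ) : ℝ) + 1 = 2 * ((k : ℝ) + 1) := by push_cast; ring
    have hm : ((2:ℝ) * ((k:ℝ) + 1)) ^ s = 2 ^ s * ((k:ℝ) + 1) ^ s :=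
      Real.mul_rpow (by norm_num) (by positivity)
    simp only [hfdef, hx, hm, Real.rpow_neg (by norm_num : (0:ℝ) ≤ 2)]
    field_simp
  have hE : (∑' k, f (2 * k + 1)) = (2:ℝ) ^ (-s) * ∑' m, f m := by
    rw [hoq, tsum_mul_left]
  rw [heq, hE] at hsum
  linear_combination hsum

lemma wt_pi_eq {s : ℝ} (hs : 1 < s) :
    (∑' m : ℕ, (1 - Real.cos (Real.pi * ((m : ℝ) + 1))) / ((m : ℝ) + 1) ^ s) =
      2 * ((1 - (2:ℝ) ^ (-s)) * ∑' m : ℕ, 1 / ((m : ℝ) + 1) ^ s) := by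
  set g : ℕ → ℝ := fun m => (1 - Real.cos (Real.pi * ((m : ℝ) + 1))) / ((m : ℝ) + 1) ^ s
    with hgdef
  have hOsum : Summable (fun k : ℕ => 1 / (2 * (k : ℝ) + 1) ^ s) := by
    have h2 : Function.Injective (fun k : ℕ => 2 * k) := fun a b h => by simpa using h
    have := (summable_base hs).comp_injective h2
    refine this.congr fun k => ?_
    show 1 / (((2*k : ℕ) : ℝ) + 1) ^ s = _
    have hc : ((2 * k : ℕ) : ℝ) + 1 = 2 * (k:ℝ) + 1 := by push_cast; ring
    rw [hc]
  have heq : (fun k : ℕ => g (2 * k)) = fun k : ℕ => 2 * (1 / (2 * (k : ℝ) + 1) ^ s) := by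
    funext k
    have : ((2 * k : ℕ) : ℝ) + 1 = 2 * (k:ℝ) + 1 := by push_cast; ring
    simp only [hgdef, this, cos_pi_odd]
    ring
  have hoq : (fun k : ℕ => g (2 * k + 1)) = fun _ : ℕ => (0:ℝ) := by
    funext k
    have : ((2 * k + 1 : ℕ) : ℝ) + 1 = 2 * (k:ℝ) + 2 := by push_cast; ring
    simp only [hgdef, this, cos_pi_even]
    simp
  have he : HasSum (fun k : ℕ => g (2 * k)) (2 * ∑' k : ℕ, 1 / (2 * (k : ℝ) + 1) ^ s) := by
    rw [heq]; exact hOsum.hasSum.mul_left 2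
  have ho : HasSum (fun k : ℕ => g (2 * k + 1)) 0 := by rw [hoq]; exact hasSum_zero
  have := (he.even_add_odd ho).tsum_eq
  rw [this, add_zero, odd_even_split hs]


lemma hasSum_pow_cos {r : ℝ} (θ : ℝ) (hr0 : 0 ≤ r) (hr1 : r < 1) :
    HasSum (fun m : ℕ => r ^ (m + 1) * Real.cos (θ * ((m : ℝ) + 1)))
      ((r * Real.cos θ - r ^ 2) / (1 - 2 * r * Real.cos θ + r ^ 2)) := by
  set z : ℂ := (r : ℂ) * Complex.exp (θ * Complex.I) with hzdef
  have hnz : ‖z‖ < 1 := by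
    rw [hzdef]
    rw [norm_mul, Complex.norm_real,
      Complex.norm_exp_ofReal_mul_I, mul_one, Real.norm_eq_abs, abs_of_nonneg hr0]
    exact hr1
  have hgeom : HasSum (fun n : ℕ => z ^ (n + 1)) (z * (1 - z)⁻¹) := by
    have := (hasSum_geometric_of_norm_lt_one hnz).mul_left z
    refine this.congr_fun fun n => ?_
    rw [pow_succ, mul_comm]
  have hre := Complex.reCLM.hasSum hgeom
  have hterm : ∀ m : ℕ, Complex.reCLM (z ^ (m + 1)) = r ^ (m + 1) * Real.cos (θ * ((m : ℝ) + 1)) := by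
    intro m
    have h1 : z ^ (m + 1) = ((r ^ (m+1) : ℝ) : ℂ) * Complex.exp ((θ * ((m:ℝ)+1) : ℝ) * Complex.I) := by
      rw [hzdef, mul_pow, ← Complex.exp_nat_mul]
      push_cast
      ring_nf
    simp only [Complex.reCLM_apply, h1, Complex.re_ofReal_mul, Complex.exp_ofReal_mul_I_re]
  have hval : (z * (1 - z)⁻¹).re =
      (r * Real.cos θ - r ^ 2) / (1 - 2 * r * Real.cos θ + r ^ 2) := by
    have hz_re : z.re = r * Real.cos θ := by
      rw [hzdef]; simp [Complex.re_ofReal_mul, Complex.exp_ofReal_mul_I_re]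
    have hz_im : z.im = r * Real.sin θ := by
      rw [hzdef]
      simp [Complex.mul_im, Complex.exp_ofReal_mul_I_re, Complex.exp_ofReal_mul_I_im]
    have hD : Complex.normSq (1 - z) = 1 - 2 * r * Real.cos θ + r ^ 2 := by
      rw [Complex.normSq_apply]
      simp only [Complex.sub_re, Complex.sub_im, Complex.one_re, Complex.one_im, hz_re, hz_im]
      have := Real.sin_sq_add_cos_sq θ
      nlinarith [this]
    rw [mul_comm z, ← div_eq_inv_mul, Complex.div_re, hD, hz_re, hz_im]
    simp only [Complex.sub_re, Complex.sub_im, Complex.one_re, Complex.one_im, hz_re, hz_im]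
    have := Real.sin_sq_add_cos_sq θ
    have hDpos : 0 < 1 - 2 * r * Real.cos θ + r ^ 2 := by
      nlinarith [Real.neg_one_le_cos θ, Real.cos_le_one θ]
    field_simp
    congr 1
    linear_combination (-r ^ 2) * this
  rw [← hval]
  exact hre.congr_fun fun m => (hterm m).symm

lemma kernel_le {r : ℝ} (hr0 : 0 ≤ r) (hr1 : r < 1) (θ : ℝ) :
    (∑' m : ℕ, r ^ (m + 1) * (1 - Real.cos (θ * ((m : ℝ) + 1)))) ≤
      ∑' m : ℕ, r ^ (m + 1) * (1 - Real.cos (Real.pi * ((m : ℝ) + 1))) := by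
  have hgeom : HasSum (fun m : ℕ => r ^ (m + 1)) (r * (1 - r)⁻¹) := by
    have := (hasSum_geometric_of_lt_one hr0 hr1).mul_left r
    refine this.congr_fun fun n => ?_
    rw [pow_succ, mul_comm]
  have key : ∀ φ : ℝ, HasSum (fun m : ℕ => r ^ (m + 1) * (1 - Real.cos (φ * ((m : ℝ) + 1))))
      (r * (1 - r)⁻¹ - (r * Real.cos φ - r ^ 2) / (1 - 2 * r * Real.cos φ + r ^ 2)) := by
    intro φ
    have := hgeom.sub (hasSum_pow_cos φ hr0 hr1)
    refine this.congr_fun fun m => ?_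
    ring
  rw [(key θ).tsum_eq, (key Real.pi).tsum_eq]
  apply sub_le_sub_left
  rw [Real.cos_pi]
  set c := Real.cos θ with hc
  have hc1 : -1 ≤ c := Real.neg_one_le_cos θ
  have hc2 : c ≤ 1 := Real.cos_le_one θ
  have hD1 : (0:ℝ) < 1 - 2 * r * (-1) + r ^ 2 := by nlinarith
  have hD2 : (0:ℝ) < 1 - 2 * r * c + r ^ 2 := by nlinarith
  rw [div_le_div_iff₀ hD1 hD2]
  nlinarith [mul_nonneg (mul_nonneg hr0 (sub_nonneg.2 hr1.le)) (by linarith : (0:ℝ) ≤ 1 + c)]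


lemma gamma_repr {s : ℝ} (hs : 1 < s) (φ : ℝ) :
    ENNReal.ofReal (Real.Gamma s * ∑' m : ℕ, (1 - Real.cos (φ * ((m : ℝ) + 1))) / ((m : ℝ) + 1) ^ s)
      = ∫⁻ t in Ioi (0:ℝ), ENNReal.ofReal
          (t ^ (s - 1) * ∑' m : ℕ, Real.exp (-t) ^ (m + 1) * (1 - Real.cos (φ * ((m : ℝ) + 1)))) := by
  have hs0 : (0:ℝ) < s := by linarith
  set c : ℕ → ℝ := fun m => 1 - Real.cos (φ * ((m : ℝ) + 1)) with hcdef
  have hc0 : ∀ m, 0 ≤ c m := fun m => by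
    have := Real.cos_le_one (φ * ((m : ℝ) + 1)); simp only [hcdef]; linarith
  have hc2 : ∀ m, c m ≤ 2 := fun m => by
    have := Real.neg_one_le_cos (φ * ((m : ℝ) + 1)); simp only [hcdef]; linarith
  set F : ℕ → ℝ → ℝ := fun m t => c m * (t ^ (s - 1) * Real.exp (-(((m : ℝ) + 1) * t)))
    with hFdef
  -- integrability of each F m on Ioi 0
  have hint : ∀ m : ℕ, IntegrableOn (fun t => t ^ (s - 1) * Real.exp (-(((m : ℝ) + 1) * t)))
      (Ioi (0:ℝ)) := by
    intro m
    have h := integrableOn_rpow_mul_exp_neg_mul_rpow (p := 1) (s := s - 1)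
      (b := (m : ℝ) + 1) (by linarith) one_pos (by positivity)
    refine h.congr_fun (fun t ht => ?_) measurableSet_Ioi
    beta_reduce; rw [Real.rpow_one]; ring_nf
  -- value of each integral
  have hval : ∀ m : ℕ, ∫ t in Ioi (0:ℝ), t ^ (s - 1) * Real.exp (-(((m : ℝ) + 1) * t))
      = (1 / ((m : ℝ) + 1)) ^ s * Real.Gamma s := by
    intro m
    exact Real.integral_rpow_mul_exp_neg_mul_Ioi hs0 (by positivity)
  -- step 1: Γ * W = ∑ of per-term integrals, as ENNReal
  have step1 : ENNReal.ofReal (Real.Gamma s * ∑' m : ℕ, c m / ((m : ℝ) + 1) ^ s)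
      = ∑' m : ℕ, ENNReal.ofReal (∫ t in Ioi (0:ℝ), F m t) := by
    rw [← tsum_mul_left]
    rw [ENNReal.ofReal_tsum_of_nonneg]
    · congr 1; funext m
      congr 1
      rw [hFdef]
      simp only
      rw [MeasureTheory.integral_const_mul, hval m]
      have hpow : ((1:ℝ) / ((m : ℝ) + 1)) ^ s = 1 / ((m : ℝ) + 1) ^ s := by
        rw [one_div, one_div, Real.inv_rpow (by positivity)]
      rw [hpow]
      ring
    · intro m
      have h2 : (0:ℝ) < ((m : ℝ) + 1) ^ s := Real.rpow_pos_of_pos (by positivity) _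
      exact mul_nonneg (Real.Gamma_nonneg_of_nonneg hs0.le) (div_nonneg (hc0 m) h2.le)
    · exact (summable_cos_term hs φ).mul_left _
  -- step 2: each ofReal integral = lintegral
  have step2 : ∀ m : ℕ, ENNReal.ofReal (∫ t in Ioi (0:ℝ), F m t)
      = ∫⁻ t in Ioi (0:ℝ), ENNReal.ofReal (F m t) := by
    intro m
    refine MeasureTheory.ofReal_integral_eq_lintegral_ofReal ((hint m).const_mul (c m)) ?_
    refine (ae_restrict_iff' measurableSet_Ioi).2 (Filter.Eventually.of_forall fun t ht => ?_)
    have h1 : (0:ℝ) ≤ t ^ (s - 1) := Real.rpow_nonneg (le_of_lt ht) _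
    exact mul_nonneg (hc0 m) (mul_nonneg h1 (Real.exp_nonneg _))
  -- step 3: swap sum and lintegral
  have hmeas : ∀ m : ℕ, AEMeasurable (fun t => ENNReal.ofReal (F m t))
      (volume.restrict (Ioi (0:ℝ))) := by
    intro m
    apply Measurable.aemeasurable
    apply Measurable.ennreal_ofReal
    exact measurable_const.mul
      (((Real.continuous_rpow_const (by linarith : (0:ℝ) ≤ s - 1)).measurable).mul
        ((measurable_const.mul measurable_id).neg.exp))
  have step3 : (∑' m : ℕ, ∫⁻ t in Ioi (0:ℝ), ENNReal.ofReal (F m t))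
      = ∫⁻ t in Ioi (0:ℝ), ∑' m : ℕ, ENNReal.ofReal (F m t) :=
    (MeasureTheory.lintegral_tsum hmeas).symm
  -- step 4: pointwise identification of the inner sum for t > 0
  have step4 : ∀ t : ℝ, t ∈ Ioi (0:ℝ) → (∑' m : ℕ, ENNReal.ofReal (F m t))
      = ENNReal.ofReal (t ^ (s - 1) * ∑' m : ℕ, Real.exp (-t) ^ (m + 1) * c m) := by
    intro t ht
    have hexp : ∀ m : ℕ, Real.exp (-(((m : ℝ) + 1) * t)) = Real.exp (-t) ^ (m + 1) := by
      intro m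
      rw [← Real.exp_nat_mul]
      congr 1
      push_cast
      ring
    have hFeq : ∀ m : ℕ, F m t = t ^ (s - 1) * (Real.exp (-t) ^ (m + 1) * c m) := by
      intro m; rw [hFdef]; simp only; rw [hexp m]; ring
    have hr1 : Real.exp (-t) < 1 := by
      rw [Real.exp_lt_one_iff]; linarith [Set.mem_Ioi.1 ht]
    have hsum : Summable (fun m : ℕ => Real.exp (-t) ^ (m + 1) * c m) := by
      have hg : Summable (fun m : ℕ => 2 * Real.exp (-t) ^ (m + 1)) := by
        have := (summable_geometric_of_lt_one (Real.exp_nonneg _) hr1).mul_left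
          (2 * Real.exp (-t))
        refine this.congr fun m => ?_
        rw [pow_succ]
        ring
      refine Summable.of_nonneg_of_le (fun m => ?_) (fun m => ?_) hg
      · exact mul_nonneg (pow_nonneg (Real.exp_nonneg _) _) (hc0 m)
      · have := hc2 m
        have hp : (0:ℝ) ≤ Real.exp (-t) ^ (m + 1) := pow_nonneg (Real.exp_nonneg _) _
        nlinarith
    have hnn : ∀ m : ℕ, 0 ≤ Real.exp (-t) ^ (m + 1) * c m :=
      fun m => mul_nonneg (pow_nonneg (Real.exp_nonneg _) _) (hc0 m)
    calc (∑' m : ℕ, ENNReal.ofReal (F m t))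
        = ∑' m : ℕ, ENNReal.ofReal (t ^ (s - 1) * (Real.exp (-t) ^ (m + 1) * c m)) := by
          congr 1; funext m; rw [hFeq m]
      _ = ENNReal.ofReal (∑' m : ℕ, t ^ (s - 1) * (Real.exp (-t) ^ (m + 1) * c m)) := by
          rw [ENNReal.ofReal_tsum_of_nonneg]
          · intro m
            exact mul_nonneg (Real.rpow_nonneg (le_of_lt (Set.mem_Ioi.1 ht)) _) (hnn m)
          · exact hsum.mul_left _
      _ = ENNReal.ofReal (t ^ (s - 1) * ∑' m : ℕ, Real.exp (-t) ^ (m + 1) * c m) := by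
          rw [tsum_mul_left]
  rw [step1]
  rw [tsum_congr step2, step3]
  exact MeasureTheory.setLIntegral_congr_fun measurableSet_Ioi
    step4

lemma wt_le_wt_pi' {s : ℝ} (hs : 1 < s) (k : ℝ) :
    (∑' m : ℕ, (1 - Real.cos (k * ((m : ℝ) + 1))) / ((m : ℝ) + 1) ^ s) ≤
      ∑' m : ℕ, (1 - Real.cos (Real.pi * ((m : ℝ) + 1))) / ((m : ℝ) + 1) ^ s := by
  have hΓ : (0:ℝ) < Real.Gamma s := Real.Gamma_pos_of_pos (by linarith)
  have hmono : ENNReal.ofReal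
        (Real.Gamma s * ∑' m : ℕ, (1 - Real.cos (k * ((m : ℝ) + 1))) / ((m : ℝ) + 1) ^ s)
      ≤ ENNReal.ofReal
        (Real.Gamma s * ∑' m : ℕ, (1 - Real.cos (Real.pi * ((m : ℝ) + 1))) / ((m : ℝ) + 1) ^ s) := by
    rw [gamma_repr hs k, gamma_repr hs Real.pi]
    refine MeasureTheory.lintegral_mono_ae ?_
    refine (ae_restrict_iff' measurableSet_Ioi).2 (Filter.Eventually.of_forall fun t ht => ?_)
    have ht0 : (0:ℝ) < t := Set.mem_Ioi.1 ht
    apply ENNReal.ofReal_le_ofReal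
    have h1 : (0:ℝ) ≤ t ^ (s - 1) := Real.rpow_nonneg ht0.le _
    refine mul_le_mul_of_nonneg_left ?_ h1
    have hr1 : Real.exp (-t) < 1 := by rw [Real.exp_lt_one_iff]; linarith
    exact kernel_le (Real.exp_nonneg _) hr1 k
  have hnn : (0:ℝ) ≤ Real.Gamma s * ∑' m : ℕ,
      (1 - Real.cos (Real.pi * ((m : ℝ) + 1))) / ((m : ℝ) + 1) ^ s := by
    refine mul_nonneg hΓ.le (tsum_nonneg fun m => ?_)
    have h1 := Real.cos_le_one (Real.pi * ((m : ℝ) + 1))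
    have h2 : (0:ℝ) < ((m : ℝ) + 1) ^ s := Real.rpow_pos_of_pos (by positivity) _
    exact div_nonneg (by linarith) h2.le
  have := (ENNReal.ofReal_le_ofReal_iff hnn).1 hmono
  exact le_of_mul_le_mul_left this hΓ

lemma wt_cast (α k : ℝ) :
    wt α k = ∑' m : ℕ, (1 - Real.cos (k * ((m : ℝ) + 1))) / ((m : ℝ) + 1) ^ (1 + α) := by
  rw [wt]; exact wt_eq α k

lemma zetaR_cast (s : ℝ) : zetaR s = ∑' m : ℕ, 1 / ((m : ℝ) + 1) ^ s := by
  rw [zetaR]; congr 1; funext m; push_cast; ring_nf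

lemma zetaR_nonneg {s : ℝ} : 0 ≤ zetaR s := by
  rw [zetaR_cast]
  refine tsum_nonneg fun m => ?_
  have h2 : (0:ℝ) < ((m : ℝ) + 1) ^ s := Real.rpow_pos_of_pos (by positivity) _
  positivity

/-- For `A ≥ A₀` the squared MI frequency `Ω²` is minimized over `[−π,π]` exactly at
`k = ±π`, with minimal value `−A₀²(2A² − A₀²)`. -/
theorem Om2_min_large_amplitude (α ε A : ℝ) (hα : 0 < α) (hε : 0 < ε) (hA : 0 < A)
    (hAA0 : A0 α ε ≤ A) :
    (∀ k ∈ Set.Icc (-Real.pi) Real.pi, Om2 α ε A Real.pi ≤ Om2 α ε A k) ∧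
    Om2 α ε A Real.pi = Om2 α ε A (-Real.pi) ∧
    Om2 α ε A Real.pi = -(A0 α ε) ^ 2 * (2 * A ^ 2 - (A0 α ε) ^ 2) := by
  have hs : 1 < 1 + α := by linarith
  have hpow : (2:ℝ) ^ (-(1 + α)) < 1 :=
    Real.rpow_lt_one_of_one_lt_of_neg (by norm_num) (by linarith)
  have harg : 0 ≤ 4 * ε * (1 - (2:ℝ) ^ (-(1 + α))) * zetaR (1 + α) := by
    have := zetaR_nonneg (s := 1 + α)
    have h1 : (0:ℝ) ≤ 1 - (2:ℝ) ^ (-(1 + α)) := by linarith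
    positivity
  have hA0sq : (A0 α ε) ^ 2 = 4 * ε * (1 - (2:ℝ) ^ (-(1 + α))) * zetaR (1 + α) := by
    rw [A0, sq, Real.mul_self_sqrt harg]
  have hwtpi : wt α Real.pi = 2 * ((1 - (2:ℝ) ^ (-(1 + α))) * zetaR (1 + α)) := by
    rw [wt_cast, zetaR_cast]
    exact wt_pi_eq hs
  have hkeysq : (A0 α ε) ^ 2 = 2 * (ε * wt α Real.pi) := by
    rw [hA0sq, hwtpi]; ring
  have hA0nn : 0 ≤ A0 α ε := Real.sqrt_nonneg _
  have hA0A : (A0 α ε) ^ 2 ≤ A ^ 2 := by nlinarith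
  refine ⟨?_, ?_, ?_⟩
  · intro k _
    have hle : wt α k ≤ wt α Real.pi := by
      rw [wt_cast, wt_cast]
      exact wt_le_wt_pi' hs k
    have h0 : 0 ≤ wt α k := by rw [wt_cast]; exact wt_nonneg' k
    have h1 : 0 ≤ ε * wt α Real.pi - ε * wt α k := by nlinarith
    have h2 : 0 ≤ A ^ 2 - ε * wt α k - ε * wt α Real.pi := by nlinarith
    simp only [Om2]
    nlinarith [mul_nonneg h1 h2]
  · simp only [Om2]
    have : wt α (-Real.pi) = wt α Real.pi := by
      rw [wt, wt]
      congr 1; funext m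
      rw [neg_mul, Real.cos_neg]
    rw [this]
  · simp only [Om2]
    linear_combination (2 * A ^ 2 - (A0 α ε) ^ 2 - 2 * (ε * wt α Real.pi)) * hkeysq
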